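/- arXiv:2312.09535 — 2 statements merged into one kernel-verified Lean document; each statement's English description precedes it below -/
import Mathlib

section
/- For an oil–vinegar central map F and any vectors o, o' in the oil space O, the polar form satisfies DF(o, o') = 0; equivalently, the oil space is totally isotropic for each polar bilinear form associated to F. -/
open Finset

section OilVinegar

variable {R : Type*} [CommSemiring R] {v n : ℕ}

variable (R v n) in
/-- The oil space `{x | x₀ = ⋯ = x_{v-1} = 0}` (coordinates are indexed from `0`). -/
def oilSpace : Submodule R (Fin n → R) :=
  Submodule.pi {i | (i : ℕ) < v} fun _ => ⊥

theorem mem_oilSpace {x : Fin n → R} :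
    x ∈ oilSpace R v n ↔ ∀ i : Fin n, (i : ℕ) < v → x i = 0 := by
  simp [oilSpace]

variable (v) in
def oilVinegarPoly (α : Fin n → Fin n → R) (x : Fin n → R) : R :=
  ∑ i : Fin n, ∑ j : Fin n, if (i : ℕ) < v ∧ i ≤ j then α i j * x i * x j else 0

/-- Every monomial of an oil–vinegar polynomial contains a vinegar variable. -/
theorem oilVinegarPoly_eq_zero_of_mem_oilSpace (α : Fin n → Fin n → R) {x : Fin n → R}
    (hx : x ∈ oilSpace R v n) : oilVinegarPoly v α x = 0 := by
  refine sum_eq_zero fun i _ => sum_eq_zero fun j _ => ?_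
  split_ifs with h
  · rw [mem_oilSpace.mp hx i h.1, mul_zero, zero_mul]
  · rfl

end OilVinegar

theorem oil_space_totally_isotropic_general {F : Type*} [Field F]
    {v o m : ℕ}
    (α : Fin m → Fin (v + o) → Fin (v + o) → F)
    (Fc : (Fin (v + o) → F) → (Fin m → F))
    (hF : ∀ x k, Fc x k =
      ∑ i : Fin (v + o), ∑ j : Fin (v + o), if (i : ℕ) < v ∧ i ≤ j then α k i j * x i * x j else 0)
    (DF : (Fin (v + o) → F) → (Fin (v + o) → F) → (Fin m → F))
    (hDF : ∀ x w, DF x w = Fc (x + w) - Fc x - Fc w) :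
    ∀ x y : Fin (v + o) → F,
      (∀ i : Fin (v + o), (i : ℕ) < v → x i = 0) →
      (∀ i : Fin (v + o), (i : ℕ) < v → y i = 0) →
      DF x y = 0 := by
  have hFc : ∀ z ∈ oilSpace F v (v + o), Fc z = 0 := fun z hz =>
    funext fun k => (hF z k).trans (oilVinegarPoly_eq_zero_of_mem_oilSpace (α k) hz :)
  intro x y hx hy
  rw [← mem_oilSpace] at hx hy
  rw [hDF, hFc x hx, hFc y hy, hFc _ (add_mem hx hy), sub_zero, sub_zero]

/-- For an oil–vinegar central map, the polar form vanishes on pairs of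
oil-space vectors: the oil space is totally isotropic. -/
theorem oil_space_totally_isotropic {F : Type*} [Field F] [Fintype F]
    {v o m : ℕ}
    (α : Fin m → Fin (v + o) → Fin (v + o) → F)
    (Fc : (Fin (v + o) → F) → (Fin m → F))
    (hF : ∀ x k, Fc x k =
      ∑ i : Fin (v + o), ∑ j : Fin (v + o), if (i : ℕ) < v ∧ i ≤ j then α k i j * x i * x j else 0)
    (DF : (Fin (v + o) → F) → (Fin (v + o) → F) → (Fin m → F))
    (hDF : ∀ x w, DF x w = Fc (x + w) - Fc x - Fc w) :
    ∀ x y : Fin (v + o) → F,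
      (∀ i : Fin (v + o), (i : ℕ) < v → x i = 0) →
      (∀ i : Fin (v + o), (i : ℕ) < v → y i = 0) →
      DF x y = 0 :=
  oil_space_totally_isotropic_general α Fc hF DF hDF
end

section
/- Suppose M_1,...,M_n are n×m matrices over F_q defined by rows (M_i)_j = DP(s_j, s_i) for a basis s_1,...,s_n of F_q^n, where P is a homogeneous quadratic map vanishing on a subspace O_2 of dimension o_2 whose polar map DP sends O_2 × F_q^n into a subspace Q_2 of dimension o_2. Then for any o = Σ c_i s_i ∈ O_2, the matrix M = Σ_{i=1}^n c_i M_i has rank at most o_2. -/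
/-!
Each coordinate of `DP` is the polar form of the quadratic form `x ↦ xᵀ A_k x`, hence linear in its
second argument. So row `j` of `∑ cᵢ Mᵢ` is `DP (s j) o ∈ Q₂`, and the row span of the matrix lies
in `Q₂`.
-/

open QuadraticMap

theorem Matrix.rank_le_finrank_of_row_mem {ι κ F : Type*} [Field F] [Finite ι] [Fintype κ]
    {N : Matrix ι κ F} (Q : Submodule F (κ → F)) (hN : ∀ i, N i ∈ Q) :
    N.rank ≤ Module.finrank F Q := by
  rw [Matrix.rank_eq_finrank_span_row]
  exact Submodule.finrank_mono (Submodule.span_le.mpr (Set.range_subset_iff.mpr hN))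

theorem Matrix.toQuadraticForm'_apply_eq_sum {n R : Type*} [Fintype n] [DecidableEq n] [CommRing R]
    (A : Matrix n n R) (x : n → R) :
    A.toQuadraticForm' x = ∑ i, ∑ j, A i j * x i * x j := by
  simp [Matrix.toQuadraticForm', Matrix.toLinearMap₂'_apply', dotProduct, Matrix.mulVec,
    Finset.mul_sum, mul_comm, mul_left_comm]

theorem QuadraticMap.polar_pi_sum_smul_right {R M N κ ι : Type*} [CommRing R] [AddCommGroup M]
    [Module R M] [AddCommGroup N] [Module R N] [Fintype ι]
    (Q : κ → QuadraticMap R M N) (x : M) (c : ι → R) (v : ι → M) :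
    (fun k => polar (Q k) x (∑ i, c i • v i)) = ∑ i, c i • fun k => polar (Q k) x (v i) := by
  ext k
  simp only [← polarBilin_apply_apply, map_sum, map_smul, Finset.sum_apply, Pi.smul_apply]

theorem rectangular_minrank_low_rank_general {F : Type*} [Field F]
    {n m o₂ : ℕ}
    (P : (Fin n → F) → (Fin m → F))
    (A : Fin m → Matrix (Fin n) (Fin n) F)
    (hP : ∀ x k, P x k = ∑ i, ∑ j, A k i j * x i * x j)
    (DP : (Fin n → F) → (Fin n → F) → (Fin m → F))
    (hDP : ∀ x w, DP x w = P (x + w) - P x - P w)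
    (O₂ : Submodule F (Fin n → F)) (Q₂ : Submodule F (Fin m → F))
    (hQ₂ : Module.finrank F Q₂ = o₂)
    (hDPQ : ∀ (x : Fin n → F), ∀ o ∈ O₂, DP x o ∈ Q₂)
    (s : Module.Basis (Fin n) F (Fin n → F))
    (M : Fin n → Matrix (Fin n) (Fin m) F)
    (hM : ∀ i j k, M i j k = DP (s j) (s i) k) :
    ∀ c : Fin n → F, (∑ i, c i • (s i : Fin n → F)) ∈ O₂ →
      Matrix.rank (∑ i, c i • M i) ≤ o₂ := by
  intro c hc
  have hDP_polar : ∀ x w, DP x w = fun k => polar (A k).toQuadraticForm' x w := by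
    intro x w
    ext k
    simp [hDP, polar, hP, Matrix.toQuadraticForm'_apply_eq_sum]
  have hrow : ∀ j, (∑ i, c i • M i) j = DP (s j) (∑ i, c i • s i) := by
    intro j
    rw [hDP_polar, polar_pi_sum_smul_right]
    ext k
    simp only [Matrix.sum_apply, Matrix.smul_apply, hM, hDP_polar, smul_eq_mul, Finset.sum_apply,
      Pi.smul_apply]
  refine (Matrix.rank_le_finrank_of_row_mem Q₂ fun j => ?_).trans hQ₂.le
  exact hrow j ▸ hDPQ _ _ hc

/-- Rectangular min-rank: for `o = Σ cᵢ sᵢ ∈ O₂`, the matrix `M = Σ cᵢ Mᵢ`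
(whose rows are `DP(sⱼ, o)` ∈ Q₂) has rank at most `o₂ = dim Q₂`. -/
theorem rectangular_minrank_low_rank {F : Type*} [Field F] [Fintype F]
    {n m o₂ : ℕ}
    (P : (Fin n → F) → (Fin m → F))
    (A : Fin m → Matrix (Fin n) (Fin n) F)
    (hP : ∀ x k, P x k = ∑ i, ∑ j, A k i j * x i * x j)
    (DP : (Fin n → F) → (Fin n → F) → (Fin m → F))
    (hDP : ∀ x w, DP x w = P (x + w) - P x - P w)
    (O₂ : Submodule F (Fin n → F)) (Q₂ : Submodule F (Fin m → F))
    (hO₂ : Module.finrank F O₂ = o₂) (hQ₂ : Module.finrank F Q₂ = o₂)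
    (hPO : ∀ x ∈ O₂, P x = 0)
    (hDPQ : ∀ (x : Fin n → F), ∀ o ∈ O₂, DP x o ∈ Q₂)
    (s : Module.Basis (Fin n) F (Fin n → F))
    (M : Fin n → Matrix (Fin n) (Fin m) F)
    (hM : ∀ i j k, M i j k = DP (s j) (s i) k) :
    ∀ c : Fin n → F, (∑ i, c i • (s i : Fin n → F)) ∈ O₂ →
      Matrix.rank (∑ i, c i • M i) ≤ o₂ :=
  rectangular_minrank_low_rank_general P A hP DP hDP O₂ Q₂ hQ₂ hDPQ s M hM
end
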